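/- If H is a connected graph of order at least two and G = H ∘ K_1 is the corona of H with K_1, then th_pd×(G) = 2γ(H). Furthermore, any power dominating set of G contained in V(H) is a dominating set of H. -/

import Mathlib

open SimpleGraph Set

variable {V : Type*} {W : Type*}

/-- The closed neighborhood of a set `S`. -/
def closedNbhdSet (G : SimpleGraph V) (S : Set V) : Set V :=
  S ∪ {w | ∃ u ∈ S, G.Adj u w}

/-- One round of the zero forcing propagation step. -/
def pdStep (G : SimpleGraph V) (A : Set V) : Set V :=
  A ∪ {w | ∃ u ∈ A, G.neighborSet u \ A = {w}}

/-- `obs G S k` is the set `P^[k](S)` of vertices observed after round `k`. -/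
def obs (G : SimpleGraph V) (S : Set V) : ℕ → Set V
  | 0 => S
  | 1 => closedNbhdSet G S
  | (n + 2) => pdStep G (obs G S (n + 1))

/-- `S` is a power dominating set. -/
def IsPDS (G : SimpleGraph V) (S : Set V) : Prop :=
  ∃ t, obs G S t = Set.univ

/-- The power propagation time `pt_pd(G;S)`: least positive `t` with `P^[t](S) = V(G)`. -/
noncomputable def ptpd (G : SimpleGraph V) (S : Set V) : ℕ :=
  sInf {t | 1 ≤ t ∧ obs G S t = Set.univ}

/-- `S` is a dominating set. -/
def IsDomSet (G : SimpleGraph V) (S : Set V) : Prop :=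
  closedNbhdSet G S = Set.univ

/-- The domination number `γ(G)`. -/
noncomputable def gamma (G : SimpleGraph V) : ℕ :=
  sInf {k | ∃ S : Set V, IsDomSet G S ∧ S.ncard = k}

/-- The power domination number `γ_P(G)`. -/
noncomputable def gammaP (G : SimpleGraph V) : ℕ :=
  sInf {k | ∃ S : Set V, IsPDS G S ∧ S.ncard = k}

/-- The product power throttling number `th_pd^×(G)`. -/
noncomputable def thpd (G : SimpleGraph V) : ℕ :=
  sInf {m | ∃ S : Set V, IsPDS G S ∧ m = S.ncard * ptpd G S}

/-- The power propagation time of `G`: minimum over minimum power dominating sets. -/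
noncomputable def ptG (G : SimpleGraph V) : ℕ :=
  sInf {t | ∃ S : Set V, IsPDS G S ∧ S.ncard = gammaP G ∧ t = ptpd G S}

/-- `newObs G S k` is `P^(k)(S)`, the set of vertices first observed in round `k`. -/
def newObs (G : SimpleGraph V) (S : Set V) : ℕ → Set V
  | 0 => S
  | (k + 1) => obs G S (k + 1) \ obs G S k

/-- `rd G S v` is the round in which `v` is first observed. -/
noncomputable def rd (G : SimpleGraph V) (S : Set V) (v : V) : ℕ :=
  sInf {k | v ∈ obs G S k}

/-- The corona `H ∘ K_1`: append one leaf to each vertex of `H`. -/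
def corona (H : SimpleGraph V) : SimpleGraph (V ⊕ V) where
  Adj x y :=
    match x, y with
    | Sum.inl u, Sum.inl v => H.Adj u v
    | Sum.inl u, Sum.inr v => u = v
    | Sum.inr u, Sum.inl v => u = v
    | Sum.inr _, Sum.inr _ => False
  symm := by
    constructor
    rintro (u | u) (v | v) h
    · exact h.symm
    · exact h.symm
    · exact h.symm
    · exact h
  loopless := by
    constructor
    rintro (u | u) h
    · exact H.loopless.irrefl u h
    · exact h

/-!
In the corona a leaf `v'` has `v` as its only neighbour, so `v'` is observed only if `v` lies in
the projection `P` of the starting set `S` to `V(H)`, or if `v` forces it, which needs `v` and all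
its `H`-neighbours to be observed already. By induction on the rounds every observed vertex of `H`
is dominated by `P`, so `P` dominates `H` whenever `S` is power dominating, and
`|S| ≥ |P| ≥ γ(H)`. If the propagation time is `1`, then `S` dominates the corona, so `P = V(H)`
and `|S| ≥ |V(H)| ≥ 2γ(H)` by Ore's bound. Conversely, from a minimum dominating set `D` of `H`
all of `V(H)` is observed in the first round and every leaf outside `D` is forced in the second.
-/

section Domination

variable {G : SimpleGraph V}

lemma isDomSet_univ (G : SimpleGraph V) : IsDomSet G univ :=
  eq_univ_of_univ_subset subset_union_left

lemma gamma_le_ncard {D : Set V} (hD : IsDomSet G D) : gamma G ≤ D.ncard :=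
  Nat.sInf_le ⟨D, hD, rfl⟩

lemma exists_isDomSet_ncard_eq_gamma (G : SimpleGraph V) :
    ∃ D : Set V, IsDomSet G D ∧ D.ncard = gamma G :=
  Nat.sInf_mem (s := {k | ∃ D : Set V, IsDomSet G D ∧ D.ncard = k}) ⟨_, univ, isDomSet_univ G, rfl⟩

/-- If `v` had no neighbour outside `D`, then `D \ {v}` would still dominate. -/
lemma IsDomSet.exists_adj_notMem_of_ncard_eq_gamma [Finite V] {D : Set V} (hD : IsDomSet G D)
    (hmin : D.ncard = gamma G) {v : V} (hv : v ∈ D) (hdeg : ∃ w, G.Adj v w) :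
    ∃ w ∉ D, G.Adj v w := by
  by_contra hcon
  have hnbrs : ∀ w, G.Adj v w → w ∈ D := fun w hw => by_contra fun hwD => hcon ⟨w, hwD, hw⟩
  have hdom : IsDomSet G (D \ {v}) := by
    refine eq_univ_of_forall fun u => ?_
    rcases eq_or_ne u v with rfl | huv
    · obtain ⟨w, hw⟩ := hdeg
      exact Or.inr ⟨w, ⟨hnbrs w hw, hw.ne.symm⟩, hw.symm⟩
    rcases hD.symm ▸ mem_univ u with hu | ⟨x, hx, hxu⟩
    · exact Or.inl ⟨hu, huv⟩
    rcases eq_or_ne x v with rfl | hxv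
    · exact Or.inl ⟨hnbrs u hxu, huv⟩
    · exact Or.inr ⟨x, ⟨hx, hxv⟩, hxu⟩
  have hlt : (D \ {v}).ncard < D.ncard := ncard_sdiff_singleton_lt_of_mem hv
  exact (gamma_le_ncard hdom).not_gt (hmin ▸ hlt)

lemma isDomSet_compl {D : Set V} (h : ∀ v ∈ D, ∃ w ∉ D, G.Adj v w) : IsDomSet G Dᶜ := by
  refine eq_univ_of_forall fun v => ?_
  by_cases hv : v ∈ D
  · obtain ⟨w, hw, hvw⟩ := h v hv
    exact Or.inr ⟨w, hw, hvw.symm⟩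
  · exact Or.inl hv

/-- Ore's bound: the complement of a minimum dominating set is dominating. -/
lemma two_mul_gamma_le_card [Finite V] (hdeg : ∀ v, ∃ w, G.Adj v w) :
    2 * gamma G ≤ Nat.card V := by
  obtain ⟨D, hD, hmin⟩ := exists_isDomSet_ncard_eq_gamma G
  have hcompl : IsDomSet G Dᶜ :=
    isDomSet_compl fun v hv => hD.exists_adj_notMem_of_ncard_eq_gamma hmin hv (hdeg v)
  have := gamma_le_ncard hcompl
  have := ncard_add_ncard_compl D
  omega

end Domination

section Propagation

variable {G : SimpleGraph V} {S A : Set V}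

lemma obs_subset_obs_succ (G : SimpleGraph V) (S : Set V) : ∀ k, obs G S k ⊆ obs G S (k + 1)
  | 0 => subset_union_left
  | _ + 1 => subset_union_left

lemma IsPDS.ptpd_spec (hS : IsPDS G S) : 1 ≤ ptpd G S ∧ obs G S (ptpd G S) = univ := by
  obtain ⟨t, ht⟩ := hS
  exact Nat.sInf_mem (s := {t | 1 ≤ t ∧ obs G S t = univ}) ⟨t + 1, Nat.le_add_left 1 t,
    eq_univ_of_univ_subset (ht ▸ obs_subset_obs_succ G S t)⟩

lemma ptpd_le {t : ℕ} (ht : 1 ≤ t) (hobs : obs G S t = univ) : ptpd G S ≤ t :=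
  Nat.sInf_le ⟨ht, hobs⟩

lemma thpd_le (hS : IsPDS G S) : thpd G ≤ S.ncard * ptpd G S :=
  Nat.sInf_le ⟨S, hS, rfl⟩

lemma le_thpd {m : ℕ} (hne : ∃ S, IsPDS G S) (h : ∀ S, IsPDS G S → m ≤ S.ncard * ptpd G S) :
    m ≤ thpd G := by
  obtain ⟨S, hS⟩ := hne
  exact le_csInf ⟨_, S, hS, rfl⟩ fun _ ⟨S, hS, hm⟩ => hm ▸ h S hS

lemma adj_and_notMem_of_neighborSet_diff_eq_singleton {u w : V}
    (h : G.neighborSet u \ A = {w}) : G.Adj u w ∧ w ∉ A :=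
  h.symm.subset rfl

lemma mem_of_neighborSet_diff_eq_singleton {u w y : V} (h : G.neighborSet u \ A = {w})
    (hy : G.Adj u y) (hyw : y ≠ w) : y ∈ A := by
  by_contra hyA
  exact hyw (h.subset ⟨hy, hyA⟩)

end Propagation

section Corona

variable {H : SimpleGraph V}

def CoronaObsInvariant (H : SimpleGraph V) (S : Set V) (A : Set (V ⊕ V)) : Prop :=
  (∀ v, Sum.inl v ∈ A → v ∈ closedNbhdSet H S) ∧
    ∀ v, Sum.inr v ∈ A → v ∈ S ∨ Sum.inl v ∈ A ∧ ∀ w, H.Adj v w → Sum.inl w ∈ A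

lemma coronaObsInvariant_closedNbhdSet (S' : Set (V ⊕ V)) :
    CoronaObsInvariant H (Sum.elim id id '' S') (closedNbhdSet (corona H) S') := by
  constructor
  · rintro v (hv | ⟨x | x, hx, hxv⟩)
    · exact Or.inl ⟨_, hv, rfl⟩
    · exact Or.inr ⟨x, ⟨_, hx, rfl⟩, hxv⟩
    · obtain rfl : x = v := hxv
      exact Or.inl ⟨_, hx, rfl⟩
  · rintro v (hv | ⟨x | x, hx, hxv⟩)
    · exact Or.inl ⟨_, hv, rfl⟩
    · obtain rfl : x = v := hxv
      exact Or.inl ⟨_, hx, rfl⟩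
    · exact hxv.elim

lemma CoronaObsInvariant.pdStep {S : Set V} {A : Set (V ⊕ V)}
    (hA : CoronaObsInvariant H S A) : CoronaObsInvariant H S (pdStep (corona H) A) := by
  obtain ⟨hinl, hinr⟩ := hA
  constructor
  · rintro v (hv | ⟨u, hu, hforce⟩)
    · exact hinl v hv
    obtain ⟨huv, hvA⟩ := adj_and_notMem_of_neighborSet_diff_eq_singleton hforce
    rcases u with x | x
    · have hleaf : Sum.inr x ∈ A :=
        mem_of_neighborSet_diff_eq_singleton hforce rfl Sum.inr_ne_inl
      rcases hinr x hleaf with hxS | ⟨-, hnbrs⟩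
      · exact Or.inr ⟨x, hxS, huv⟩
      · exact absurd (hnbrs v huv) hvA
    · obtain rfl : x = v := huv
      rcases hinr x hu with hxS | ⟨hx, -⟩
      · exact Or.inl hxS
      · exact absurd hx hvA
  · rintro v (hv | ⟨u, hu, hforce⟩)
    · exact (hinr v hv).imp_right fun ⟨hl, hnbrs⟩ => ⟨Or.inl hl, fun w hw => Or.inl (hnbrs w hw)⟩
    obtain ⟨huv, -⟩ := adj_and_notMem_of_neighborSet_diff_eq_singleton hforce
    rcases u with x | x
    · obtain rfl : x = v := huv
      exact Or.inr ⟨Or.inl hu, fun w hw =>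
        Or.inl (mem_of_neighborSet_diff_eq_singleton hforce hw Sum.inl_ne_inr)⟩
    · exact huv.elim

lemma coronaObsInvariant_obs_succ (S' : Set (V ⊕ V)) :
    ∀ k, CoronaObsInvariant H (Sum.elim id id '' S') (obs (corona H) S' (k + 1))
  | 0 => coronaObsInvariant_closedNbhdSet S'
  | k + 1 => (coronaObsInvariant_obs_succ S' k).pdStep

lemma IsPDS.isDomSet_image_corona {S' : Set (V ⊕ V)} (hS' : IsPDS (corona H) S') :
    IsDomSet H (Sum.elim id id '' S') := by
  obtain ⟨t, ht⟩ := hS'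
  have ht' : obs (corona H) S' (t + 1) = univ :=
    eq_univ_of_univ_subset (ht ▸ obs_subset_obs_succ _ _ t)
  exact eq_univ_of_forall fun v => (coronaObsInvariant_obs_succ S' t).1 v (ht' ▸ mem_univ _)

lemma image_elim_eq_univ_of_isDomSet_corona {S' : Set (V ⊕ V)} (hS' : IsDomSet (corona H) S') :
    Sum.elim id id '' S' = univ := by
  refine eq_univ_of_forall fun v => ?_
  rcases hS'.symm ▸ mem_univ (Sum.inr v) with hv | ⟨x | x, hx, hxv⟩
  · exact ⟨_, hv, rfl⟩
  · obtain rfl : x = v := hxv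
    exact ⟨_, hx, rfl⟩
  · exact hxv.elim

lemma two_mul_gamma_le_ncard_mul_ptpd_corona [Finite V] (hdeg : ∀ v, ∃ w, H.Adj v w)
    {S' : Set (V ⊕ V)} (hS' : IsPDS (corona H) S') :
    2 * gamma H ≤ S'.ncard * ptpd (corona H) S' := by
  obtain ⟨hpt, hobs⟩ := hS'.ptpd_spec
  have hproj : (Sum.elim id id '' S').ncard ≤ S'.ncard := ncard_image_le S'.toFinite
  rcases hpt.eq_or_lt with hpt1 | hpt2
  · rw [← hpt1] at hobs ⊢
    rw [image_elim_eq_univ_of_isDomSet_corona hobs, ncard_univ] at hproj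
    have := two_mul_gamma_le_card hdeg
    omega
  · have hgamma := (gamma_le_ncard hS'.isDomSet_image_corona).trans hproj
    calc 2 * gamma H = gamma H * 2 := mul_comm _ _
      _ ≤ S'.ncard * ptpd (corona H) S' := Nat.mul_le_mul hgamma hpt2

lemma inl_mem_obs_one_corona {D : Set V} (hD : IsDomSet H D) (v : V) :
    Sum.inl v ∈ obs (corona H) (Sum.inl '' D) 1 := by
  rcases hD.symm ▸ mem_univ v with hv | ⟨u, hu, huv⟩
  · exact Or.inl ⟨v, hv, rfl⟩
  · exact Or.inr ⟨Sum.inl u, ⟨u, hu, rfl⟩, huv⟩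

lemma inr_mem_obs_one_corona_iff {D : Set V} {v : V} :
    Sum.inr v ∈ obs (corona H) (Sum.inl '' D) 1 ↔ v ∈ D := by
  constructor
  · rintro (⟨_, _, h⟩ | ⟨x | x, ⟨u, hu, hux⟩, hxv⟩)
    · exact (Sum.inl_ne_inr h).elim
    · obtain rfl : u = x := Sum.inl_injective hux
      obtain rfl : u = v := hxv
      exact hu
    · exact (Sum.inl_ne_inr hux).elim
  · exact fun hv => Or.inr ⟨Sum.inl v, ⟨v, hv, rfl⟩, rfl⟩

/-- A leaf outside `D` is the last unobserved neighbour of its support vertex after round `1`. -/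
lemma obs_two_corona_image_inl {D : Set V} (hD : IsDomSet H D) :
    obs (corona H) (Sum.inl '' D) 2 = univ := by
  refine eq_univ_of_forall fun x => ?_
  rcases x with v | v
  · exact Or.inl (inl_mem_obs_one_corona hD v)
  by_cases hv : v ∈ D
  · exact Or.inl (inr_mem_obs_one_corona_iff.mpr hv)
  refine Or.inr ⟨Sum.inl v, inl_mem_obs_one_corona hD v, ?_⟩
  ext (w | w)
  · simpa using fun _ => inl_mem_obs_one_corona hD w
  · refine ⟨fun ⟨hvw, _⟩ => ?_, fun hw => ?_⟩
    · obtain rfl : v = w := hvw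
      rfl
    · obtain rfl : w = v := Sum.inr_injective hw
      exact ⟨rfl, mt inr_mem_obs_one_corona_iff.mp hv⟩

end Corona

theorem stmt13 [Fintype V] (H : SimpleGraph V) (hH : H.Connected)
    (hn : 2 ≤ Fintype.card V) :
    thpd (corona H) = 2 * gamma H ∧
      ∀ S : Set V, IsPDS (corona H) (Sum.inl '' S) → IsDomSet H S := by
  have : Nontrivial V := Fintype.one_lt_card_iff_nontrivial.mp hn
  have hdeg : ∀ v, ∃ w, H.Adj v w := hH.preconnected.exists_adj_of_nontrivial
  obtain ⟨D, hD, hDcard⟩ := exists_isDomSet_ncard_eq_gamma H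
  have hDpds : IsPDS (corona H) (Sum.inl '' D) := ⟨2, obs_two_corona_image_inl hD⟩
  refine ⟨le_antisymm ?_ ?_, fun S hS => by simpa [image_image] using hS.isDomSet_image_corona⟩
  · calc thpd (corona H) ≤ (Sum.inl '' D).ncard * ptpd (corona H) (Sum.inl '' D) := thpd_le hDpds
      _ ≤ gamma H * 2 := by
        rw [ncard_image_of_injective _ Sum.inl_injective, hDcard]
        exact Nat.mul_le_mul_left _ (ptpd_le one_le_two (obs_two_corona_image_inl hD))
      _ = 2 * gamma H := mul_comm _ _
  · exact le_thpd ⟨_, hDpds⟩ fun S' hS' => two_mul_gamma_le_ncard_mul_ptpd_corona hdeg hS'
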